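/- Let p and d be natural numbers, let 𝔾_p be the class of graphs of degree at most p, and let X ⊂ ℝ^d be bounded. For every GFMT T of type d → r expressible in MPLang (i.e., defined componentwise by a tuple of r MPLang expressions appropriate for input arity d) there exists an MPNN N of type d → r such that N(G)(χ)(v) = T(G)(χ)(v) for every graph G ∈ 𝔾_p, every d-dimensional feature map χ on G whose image is contained in X, and every node v of G. -/

import Mathlib

open scoped BigOperators

/-- A finite graph: nodes `Fin n`, with a symmetric, irreflexive adjacency relation. -/
structure FGraph where
  n : ℕ
  adj : Fin n → Fin n → Bool
  symm : ∀ u v, adj u v = adj v u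
  irrefl : ∀ v, adj v v = false

namespace FGraph

/-- The set of neighbors of `v` in `G`. -/
def neighbors (G : FGraph) (v : Fin G.n) : Finset (Fin G.n) :=
  Finset.univ.filter fun u => G.adj v u

/-- The degree of a node. -/
def degree (G : FGraph) (v : Fin G.n) : ℕ := (G.neighbors v).card

/-- `G` has degree at most `p` (i.e., `G ∈ 𝔾_p`). -/
def DegreeLE (G : FGraph) (p : ℕ) : Prop := ∀ v, G.degree v ≤ p

end FGraph

/-- The rectified linear unit. -/
noncomputable def ReLU (x : ℝ) : ℝ := max 0 x

/-- An MPNN layer of type `d → r`: matrices `W₁, W₂ ∈ ℝ^{r×d}`, bias `b ∈ ℝ^r`,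
and a continuous activation function `σ`. -/
structure Layer (d r : ℕ) where
  W₁ : Matrix (Fin r) (Fin d) ℝ
  W₂ : Matrix (Fin r) (Fin d) ℝ
  b : Fin r → ℝ
  σ : ℝ → ℝ
  hσ : Continuous σ

namespace Layer

/-- The GFMT defined by a layer:
`L(G)(χ)(v) = σ(W₁ χ(v) + W₂ Σ_{u ∈ N_G(v)} χ(u) + b)`, componentwise. -/
noncomputable def eval {d r : ℕ} (L : Layer d r) (G : FGraph)
    (χ : Fin G.n → Fin d → ℝ) (v : Fin G.n) : Fin r → ℝ :=
  fun i => L.σ (L.W₁.mulVec (χ v) i + L.W₂.mulVec (∑ u ∈ G.neighbors v, χ u) i + L.b i)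

end Layer

/-- An MPNN: a nonempty sequence of layers with matching arities. -/
inductive MPNN : ℕ → ℕ → Type where
  | single {d r : ℕ} : Layer d r → MPNN d r
  | cons {d m r : ℕ} : Layer d m → MPNN m r → MPNN d r

namespace MPNN

/-- The GFMT defined by an MPNN: the sequential composition of its layers. -/
noncomputable def eval : {d r : ℕ} → MPNN d r → (G : FGraph) →
    (Fin G.n → Fin d → ℝ) → (Fin G.n → Fin r → ℝ)
  | _, _, .single L, G, χ => L.eval G χ
  | _, _, .cons L N, G, χ => N.eval G (L.eval G χ)

/-- A ReLU-MPNN: every layer uses ReLU, except that the last layer may use the identity. -/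
def IsReLU : {d r : ℕ} → MPNN d r → Prop
  | _, _, .single L => L.σ = ReLU ∨ L.σ = id
  | _, _, .cons L N => L.σ = ReLU ∧ N.IsReLU

/-- The set of activation functions used in the layers of an MPNN. -/
def activations : {d r : ℕ} → MPNN d r → Set (ℝ → ℝ)
  | _, _, .single L => {L.σ}
  | _, _, .cons L N => insert L.σ N.activations

/-- The number of layers of an MPNN. -/
def numLayers : {d r : ℕ} → MPNN d r → ℕ
  | _, _, .single _ => 1
  | _, _, .cons _ N => N.numLayers + 1

end MPNN

/-- MPLang expressions: `e ::= 1 | P_i | a·e | e + e | f(e) | ◇e`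
with `f : ℝ → ℝ` continuous. -/
inductive MPLang : Type where
  | one : MPLang
  | proj : ℕ → MPLang
  | scale : ℝ → MPLang → MPLang
  | add : MPLang → MPLang → MPLang
  | app : (f : ℝ → ℝ) → Continuous f → MPLang → MPLang
  | diamond : MPLang → MPLang

namespace MPLang

/-- `e` is appropriate for input arity `d`: every `P_i` has `1 ≤ i ≤ d`. -/
def Appropriate (d : ℕ) : MPLang → Prop
  | .one => True
  | .proj i => 1 ≤ i ∧ i ≤ d
  | .scale _ e => e.Appropriate d
  | .add e₁ e₂ => e₁.Appropriate d ∧ e₂.Appropriate d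
  | .app _ _ e => e.Appropriate d
  | .diamond e => e.Appropriate d

/-- Semantics of MPLang expressions (the `P_i` are 1-based; out-of-range
projections, which cannot occur in expressions appropriate for `d`, yield 0). -/
noncomputable def eval (d : ℕ) : MPLang → (G : FGraph) →
    (Fin G.n → Fin d → ℝ) → Fin G.n → ℝ
  | .one, _, _, _ => 1
  | .proj i, _, χ, v => if h : i - 1 < d then χ v ⟨i - 1, h⟩ else 0
  | .scale a e, G, χ, v => a * e.eval d G χ v
  | .add e₁ e₂, G, χ, v => e₁.eval d G χ v + e₂.eval d G χ v
  | .app f _ e, G, χ, v => f (e.eval d G χ v)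
  | .diamond e, G, χ, v => ∑ u ∈ G.neighbors v, e.eval d G χ u

/-- All function applications in the expression apply functions from `F`. -/
def AppsIn (F : Set (ℝ → ℝ)) : MPLang → Prop
  | .one => True
  | .proj _ => True
  | .scale _ e => e.AppsIn F
  | .add e₁ e₂ => e₁.AppsIn F ∧ e₂.AppsIn F
  | .app f _ e => f ∈ F ∧ e.AppsIn F
  | .diamond e => e.AppsIn F

/-- A ReLU-MPLang expression: all function applications apply ReLU. -/
def IsReLU (e : MPLang) : Prop := e.AppsIn {ReLU}

end MPLang

/-!
An expression `e` appropriate for `d` is compiled, by induction on `e`, into an MPNN that keeps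
its `d` input channels and appends the value of `e`. Constants, projections, scaling, sums and `◇`
need only layers with the identity activation. Since a layer applies one activation to all
channels, `f(e)` uses an activation that is the identity on `[-B, B]` and is `f` after a shift by
`2B + 1`; such a `B` exists because, on graphs of degree at most `p`, bounded inputs keep every
intermediate feature bounded. Stacking the networks of the `r` expressions and projecting onto
the appended channels gives the required MPNN.
-/

abbrev GFMT (d r : ℕ) : Type :=
  (G : FGraph) → (Fin G.n → Fin d → ℝ) → Fin G.n → Fin r → ℝ

def BoundedBy {n d : ℕ} (B : ℝ) (χ : Fin n → Fin d → ℝ) : Prop := ∀ v i, |χ v i| ≤ B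

namespace MPNN

def trans : {d m r : ℕ} → MPNN d m → MPNN m r → MPNN d r
  | _, _, _, .single L, M => .cons L M
  | _, _, _, .cons L N, M => .cons L (N.trans M)

theorem eval_trans : ∀ {d m r : ℕ} (N : MPNN d m) (M : MPNN m r) (G : FGraph)
    (χ : Fin G.n → Fin d → ℝ), (N.trans M).eval G χ = M.eval G (N.eval G χ)
  | _, _, _, .single _, _, _, _ => rfl
  | _, _, _, .cons L N, M, G, χ => eval_trans N M G (L.eval G χ)

end MPNN

namespace Layer

variable {d r : ℕ}

noncomputable def affine (φ ψ : Fin r → (Fin d → ℝ) →ₗ[ℝ] ℝ) (c : Fin r → ℝ) : Layer d r :=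
  ⟨LinearMap.toMatrix' (LinearMap.pi φ), LinearMap.toMatrix' (LinearMap.pi ψ), c, id,
    continuous_id⟩

theorem affine_eval (φ ψ : Fin r → (Fin d → ℝ) →ₗ[ℝ] ℝ) (c : Fin r → ℝ) (G : FGraph)
    (χ : Fin G.n → Fin d → ℝ) (v : Fin G.n) (i : Fin r) :
    (affine φ ψ c).eval G χ v i = φ i (χ v) + ψ i (∑ u ∈ G.neighbors v, χ u) + c i := by
  simp [affine, eval, LinearMap.toMatrix'_mulVec]

end Layer

/-- A single activation that leaves the channels bounded by `B` unchanged and applies `f` to a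
channel shifted up by `2 * B + 1`. -/
noncomputable def glue (f : ℝ → ℝ) (B x : ℝ) : ℝ :=
  x + min 1 (max 0 (x - B)) * (f (x - (2 * B + 1)) - x)

section Glue

variable {f : ℝ → ℝ} {B x : ℝ}

theorem continuous_glue (hf : Continuous f) (B : ℝ) : Continuous (glue f B) := by
  unfold glue; fun_prop

theorem glue_of_le (hx : x ≤ B) : glue f B x = x := by
  simp [glue, max_eq_left (sub_nonpos.mpr hx)]

theorem glue_add_shift (hx : -B ≤ x) : glue f B (x + (2 * B + 1)) = f x := by
  have h : 1 ≤ x + (2 * B + 1) - B := by linarith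
  simp [glue, max_eq_right (zero_le_one.trans h), min_eq_left h]

end Glue

namespace GFMT

variable {d m r : ℕ}

def MPNNExpressible (p : ℕ) (F : GFMT d r) : Prop :=
  ∀ B : ℝ, ∃ N : MPNN d r, ∀ G : FGraph, G.DegreeLE p →
    ∀ χ : Fin G.n → Fin d → ℝ, BoundedBy B χ → N.eval G χ = F G χ

def IsBounded (p : ℕ) (F : GFMT d r) : Prop :=
  ∀ B : ℝ, ∃ B' : ℝ, ∀ G : FGraph, G.DegreeLE p →
    ∀ χ : Fin G.n → Fin d → ℝ, BoundedBy B χ → BoundedBy B' (F G χ)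

variable {p : ℕ}

theorem MPNNExpressible.congr {F F' : GFMT d r} (hF : MPNNExpressible p F)
    (h : ∀ G χ, F G χ = F' G χ) : MPNNExpressible p F' := by
  simpa only [← funext fun G => funext (h G)] using hF

theorem MPNNExpressible.trans {F : GFMT d m} {H : GFMT m r} (hF : MPNNExpressible p F)
    (hF_bdd : IsBounded p F) (hH : MPNNExpressible p H) :
    MPNNExpressible p fun G χ => H G (F G χ) := by
  intro B
  obtain ⟨B', hB'⟩ := hF_bdd B
  obtain ⟨N, hN⟩ := hF B
  obtain ⟨M, hM⟩ := hH B'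
  refine ⟨N.trans M, fun G hG χ hχ => ?_⟩
  rw [MPNN.eval_trans, hN G hG χ hχ, hM G hG _ (hB' G hG χ hχ)]

theorem IsBounded.trans {F : GFMT d m} {H : GFMT m r} (hF : IsBounded p F)
    (hH : IsBounded p H) : IsBounded p fun G χ => H G (F G χ) := by
  intro B
  obtain ⟨B', hB'⟩ := hF B
  obtain ⟨B'', hB''⟩ := hH B'
  exact ⟨B'', fun G hG χ hχ => hB'' G hG _ (hB' G hG χ hχ)⟩

theorem mpnnExpressible_affine (φ ψ : Fin r → (Fin d → ℝ) →ₗ[ℝ] ℝ) (c : Fin r → ℝ) :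
    MPNNExpressible p fun G χ v i => φ i (χ v) + ψ i (∑ u ∈ G.neighbors v, χ u) + c i :=
  fun _ => ⟨.single (Layer.affine φ ψ c), fun G _ χ _ => by
    ext v i; exact Layer.affine_eval φ ψ c G χ v i⟩

theorem mpnnExpressible_snoc_affine {D D' : ℕ} (ι : Fin D → Fin D')
    (φ ψ : (Fin D' → ℝ) →ₗ[ℝ] ℝ) (c : ℝ) :
    MPNNExpressible p fun G χ v =>
      Fin.snoc (χ v ∘ ι) (φ (χ v) + ψ (∑ u ∈ G.neighbors v, χ u) + c) := by
  convert mpnnExpressible_affine (p := p) (Fin.snoc (fun j => LinearMap.proj (ι j)) φ)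
    (Fin.snoc 0 ψ) (Fin.snoc 0 c) using 4 with G χ v
  funext i
  induction i using Fin.lastCases <;> simp [map_sum]

theorem mpnnExpressible_map_last {D : ℕ} {f : ℝ → ℝ} (hf : Continuous f) :
    MPNNExpressible p fun _ χ v => Fin.snoc (Fin.init (χ v)) (f (χ v (Fin.last D))) := by
  intro B
  refine ⟨.single ⟨1, 0, Fin.snoc 0 (2 * B + 1), glue f B, continuous_glue hf B⟩,
    fun _ _ χ hχ => ?_⟩
  ext v i
  simp only [MPNN.eval, Layer.eval, Matrix.one_mulVec, Matrix.zero_mulVec, Pi.zero_apply,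
    add_zero]
  induction i using Fin.lastCases with
  | last => simp [glue_add_shift (neg_le_of_abs_le (hχ v _))]
  | cast j => simp [glue_of_le (le_of_abs_le (hχ v _)), Fin.init]

end GFMT

namespace MPLang

theorem Appropriate.mono {d D : ℕ} (h : d ≤ D) {e : MPLang} (he : e.Appropriate d) :
    e.Appropriate D := by
  induction e with
  | one => trivial
  | proj _ => exact ⟨he.1, he.2.trans h⟩
  | scale _ _ ih => exact ih he
  | add _ _ ih₁ ih₂ => exact ⟨ih₁ he.1, ih₂ he.2⟩
  | app _ _ _ ih => exact ih he
  | diamond _ ih => exact ih he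

theorem eval_castLE {d D : ℕ} (h : d ≤ D) {e : MPLang} (he : e.Appropriate d) (G : FGraph)
    (χ : Fin G.n → Fin D → ℝ) (v : Fin G.n) :
    e.eval D G χ v = e.eval d G (fun u => χ u ∘ Fin.castLE h) v := by
  induction e generalizing v with
  | one => rfl
  | proj i =>
    have hi : i - 1 < d := by simp only [Appropriate] at he; omega
    simp [eval, hi, hi.trans_le h]
  | scale _ _ ih => simp only [eval, ih he]
  | add _ _ ih₁ ih₂ => simp only [eval, ih₁ he.1, ih₂ he.2]
  | app _ _ _ ih => simp only [eval, ih he]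
  | diamond _ ih => simp only [eval, ih he]

theorem eval_snoc {d : ℕ} {e : MPLang} (he : e.Appropriate d) (G : FGraph)
    (χ : Fin G.n → Fin d → ℝ) (y : Fin G.n → ℝ) (v : Fin G.n) :
    e.eval (d + 1) G (fun u => Fin.snoc (χ u) (y u)) v = e.eval d G χ v := by
  rw [eval_castLE d.le_succ he]
  congr with u : 1
  exact Fin.snoc_comp_castSucc

theorem eval_append {d k : ℕ} {e : MPLang} (he : e.Appropriate d) (G : FGraph)
    (χ : Fin G.n → Fin d → ℝ) (y : Fin G.n → Fin k → ℝ) (v : Fin G.n) :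
    e.eval (d + k) G (fun u => Fin.append (χ u) (y u)) v = e.eval d G χ v := by
  rw [eval_castLE (d.le_add_right k) he]
  congr with u i
  exact Fin.append_left (χ u) (y u) i

theorem exists_bound_eval (p d : ℕ) (e : MPLang) (B : ℝ) :
    ∃ M : ℝ, ∀ G : FGraph, G.DegreeLE p → ∀ χ : Fin G.n → Fin d → ℝ, BoundedBy B χ →
      ∀ v, |e.eval d G χ v| ≤ M := by
  induction e with
  | one => exact ⟨1, fun _ _ _ _ _ => by simp [eval]⟩
  | proj i =>
    refine ⟨|B|, fun G _ χ hχ v => ?_⟩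
    unfold eval
    split_ifs
    · exact (hχ v _).trans (le_abs_self B)
    · simp
  | scale a e ih =>
    obtain ⟨M, hM⟩ := ih
    refine ⟨|a| * M, fun G hG χ hχ v => ?_⟩
    rw [eval, abs_mul]
    exact mul_le_mul_of_nonneg_left (hM G hG χ hχ v) (abs_nonneg a)
  | add e₁ e₂ ih₁ ih₂ =>
    obtain ⟨M₁, hM₁⟩ := ih₁
    obtain ⟨M₂, hM₂⟩ := ih₂
    exact ⟨M₁ + M₂, fun G hG χ hχ v =>
      (abs_add_le _ _).trans (add_le_add (hM₁ G hG χ hχ v) (hM₂ G hG χ hχ v))⟩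
  | app f hf e ih =>
    obtain ⟨M, hM⟩ := ih
    obtain ⟨K, hK⟩ := isCompact_Icc.exists_bound_of_continuousOn (s := Set.Icc (-M) M)
      hf.continuousOn
    exact ⟨K, fun G hG χ hχ v => hK _ (abs_le.mp (hM G hG χ hχ v))⟩
  | diamond e ih =>
    obtain ⟨M, hM⟩ := ih
    refine ⟨p * |M|, fun G hG χ hχ v => ?_⟩
    calc |∑ u ∈ G.neighbors v, e.eval d G χ u|
        ≤ ∑ u ∈ G.neighbors v, |e.eval d G χ u| := Finset.abs_sum_le_sum_abs _ _
      _ ≤ G.degree v * |M| := by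
        simpa [FGraph.degree] using
          Finset.sum_le_card_nsmul _ _ _ fun u _ => (hM G hG χ hχ u).trans (le_abs_self M)
      _ ≤ p * |M| := by gcongr; exact_mod_cast hG v

open GFMT

variable {p : ℕ}

noncomputable def appendEval (d : ℕ) (e : MPLang) : GFMT d (d + 1) :=
  fun G χ v => Fin.snoc (χ v) (e.eval d G χ v)

noncomputable def appendEvals (d : ℕ) {k : ℕ} (es : Fin k → MPLang) : GFMT d (d + k) :=
  fun G χ v => Fin.append (χ v) fun j => (es j).eval d G χ v

theorem isBounded_appendEval (d : ℕ) (e : MPLang) : IsBounded p (appendEval d e) := by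
  intro B
  obtain ⟨M, hM⟩ := e.exists_bound_eval p d B
  refine ⟨max B M, fun G hG χ hχ v i => ?_⟩
  induction i using Fin.lastCases with
  | last => simpa [appendEval] using le_max_of_le_right (hM G hG χ hχ v)
  | cast i => simpa [appendEval] using le_max_of_le_left (hχ v i)

theorem isBounded_appendEvals (d : ℕ) {k : ℕ} (es : Fin k → MPLang) :
    IsBounded p (appendEvals d es) := by
  intro B
  choose M hM using fun j => (es j).exists_bound_eval p d B
  obtain ⟨M', hM'⟩ := Finite.exists_le M
  refine ⟨max B M', fun G hG χ hχ v i => ?_⟩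
  induction i using Fin.addCases with
  | left i => simpa [appendEvals] using le_max_of_le_left (hχ v i)
  | right j => simpa [appendEvals] using le_max_of_le_right ((hM j G hG χ hχ v).trans (hM' j))

theorem mpnnExpressible_appendEval {e : MPLang} : ∀ {d : ℕ}, e.Appropriate d →
    MPNNExpressible p (appendEval d e) := by
  induction e with
  | one =>
    intro d _
    convert mpnnExpressible_snoc_affine (p := p) id 0 0 1 using 4
    simp [appendEval, eval]
  | proj i =>
    intro d he
    have hi : i - 1 < d := by simp only [Appropriate] at he; omega
    convert mpnnExpressible_snoc_affine (p := p) id (LinearMap.proj ⟨i - 1, hi⟩) 0 0 using 4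
    simp [appendEval, eval, hi]
  | scale a e ih =>
    intro d he
    convert (ih he).trans (isBounded_appendEval d e)
      (mpnnExpressible_snoc_affine Fin.castSucc (a • LinearMap.proj (Fin.last d)) 0 0) using 4
    simp [appendEval, eval]
  | add e₁ e₂ ih₁ ih₂ =>
    intro d he
    have h₂ := ih₂ (he.2.mono d.le_succ)
    convert ((ih₁ he.1).trans (isBounded_appendEval d e₁) h₂).trans
      ((isBounded_appendEval d e₁).trans (isBounded_appendEval (d + 1) e₂))
      (mpnnExpressible_snoc_affine (Fin.castSucc ∘ Fin.castSucc)
        (LinearMap.proj (R := ℝ) (φ := fun _ => ℝ) (Fin.last d).castSucc +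
          LinearMap.proj (Fin.last (d + 1))) 0 0) using 4 with G χ v
    simp [appendEval, eval, ← Function.comp_assoc]
    exact (eval_snoc he.2 G χ _ v).symm
  | app f hf e ih =>
    intro d he
    convert (ih he).trans (isBounded_appendEval d e) (mpnnExpressible_map_last hf) using 4
    simp [appendEval, eval]
  | diamond e ih =>
    intro d he
    convert (ih he).trans (isBounded_appendEval d e)
      (mpnnExpressible_snoc_affine Fin.castSucc 0 (LinearMap.proj (Fin.last d)) 0) using 4
    simp [appendEval, eval]

theorem mpnnExpressible_appendEvals {d : ℕ} : ∀ {k : ℕ} (es : Fin k → MPLang),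
    (∀ j, (es j).Appropriate d) → MPNNExpressible p (appendEvals d es)
  | 0, es, _ => by
    refine (mpnnExpressible_affine (r := d + 0) (fun i => LinearMap.proj i) 0 0).congr
      fun G χ => ?_
    ext v i
    simp only [LinearMap.proj_apply, LinearMap.zero_apply, Pi.zero_apply, add_zero]
    exact (Fin.append_left (χ v) _ i).symm
  | k + 1, es, hes => by
    refine ((mpnnExpressible_appendEvals (Fin.init es) fun j => hes _).trans
      (isBounded_appendEvals d _)
      (mpnnExpressible_appendEval ((hes (Fin.last k)).mono (d.le_add_right k)))).congr
      fun G χ => ?_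
    ext v : 1
    unfold appendEval appendEvals
    rw [eval_append (hes _), ← Fin.append_snoc]
    exact congrArg _ (Fin.snoc_init_self fun j => (es j).eval d G χ v)

end MPLang

/-- Theorem 2 of the paper: over graphs of degree at most `p`
and feature maps with values in a bounded set `X`, every GFMT expressible in
MPLang is expressible by an MPNN. -/
theorem mplang_to_mpnn_bounded (p d r : ℕ) (X : Set (Fin d → ℝ))
    (hX : Bornology.IsBounded X)
    (es : Fin r → MPLang) (happ : ∀ j, (es j).Appropriate d) :
    ∃ N : MPNN d r,
      ∀ (G : FGraph), G.DegreeLE p →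
        ∀ χ : Fin G.n → Fin d → ℝ, (∀ v, χ v ∈ X) →
          ∀ (v : Fin G.n) (j : Fin r), N.eval G χ v j = (es j).eval d G χ v := by
  obtain ⟨B, hB⟩ := isBounded_iff_forall_norm_le.mp hX
  have hexpr := (MPLang.mpnnExpressible_appendEvals (p := p) es happ).trans
    (MPLang.isBounded_appendEvals d es)
    (GFMT.mpnnExpressible_affine (fun j => LinearMap.proj (Fin.natAdd d j)) 0 0)
  obtain ⟨N, hN⟩ := hexpr B
  refine ⟨N, fun G hG χ hχ v j => ?_⟩
  have hχB : BoundedBy B χ := fun v i => (norm_le_pi_norm (χ v) i).trans (hB _ (hχ v))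
  simp [hN G hG χ hχB, MPLang.appendEvals]
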